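/- With the notation of the previous statement: if $\gamma=\gamma_1$ and $\epsilon>0$, or if $\gamma=\gamma_2$ and $\epsilon<0$, then $h'(0)>0$; consequently there exists $\delta_h\in(0,1)$ such that $\tfrac12 h'(0)t\le h(t)\le 2h'(0)t$ for all $t\in(0,\delta_h)$. -/

import Mathlib

/-!
The root equation gives `h(0) = 0`. Near `t = 0` both bases `γ - (γ - ε)t` and `1 - t` are
positive, so `h` is differentiable at `0`, and after eliminating `μ` by the root equation its
derivative is `(p-1)γ^(p-2)(N - p - pγ + ε)ε`, positive under either sign condition. The comparison
`h'(0)t/2 ≤ h(t) ≤ 2h'(0)t` is then the convergence of the slope `h(t)/t` to `h'(0)`.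
-/

open Filter Set Topology

/-- The root equation `γ^(p-2)[(p-1)γ² - (N-p)γ] + μ = 0`. -/
def rootEq (N p μ γ : ℝ) : Prop :=
  γ ^ (p - 2) * ((p - 1) * γ ^ 2 - (N - p) * γ) + μ = 0

/-- `k(s) = (p-1)s² - (N-p)s`. -/
def kfun (N p s : ℝ) : ℝ := (p - 1) * s ^ 2 - (N - p) * s

/-- `h(t) = |γ-(γ-ε)t|^(p-2) [k(γ-ε)t - k(γ)] - μ|1-t|^(p-2)(1-t)`. -/
noncomputable def hfun (N p μ γ ε t : ℝ) : ℝ :=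
  |γ - (γ - ε) * t| ^ (p - 2) * (kfun N p (γ - ε) * t - kfun N p γ) -
    μ * |1 - t| ^ (p - 2) * (1 - t)

lemma HasDerivAt.eventually_mul_lt_and_lt_mul {f : ℝ → ℝ} {D a b : ℝ} (hf : HasDerivAt f D 0)
    (h0 : f 0 = 0) (ha : a < D) (hb : D < b) :
    ∀ᶠ t in 𝓝[>] 0, a * t < f t ∧ f t < b * t := by
  filter_upwards [hf.tendsto_slope_zero_right.eventually (Ioo_mem_nhds ha hb),
    self_mem_nhdsWithin] with t ⟨hlo, hhi⟩ (ht : 0 < t)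
  rw [zero_add, h0, sub_zero, smul_eq_mul, ← div_eq_inv_mul] at hlo hhi
  exact ⟨(lt_div_iff₀ ht).1 hlo, (div_lt_iff₀ ht).1 hhi⟩

section hfun

variable {N p μ γ : ℝ}

lemma hfun_zero (ε : ℝ) (hγ : 0 ≤ γ) (hroot : rootEq N p μ γ) : hfun N p μ γ ε 0 = 0 := by
  simp only [hfun, kfun, mul_zero, zero_sub, sub_zero, abs_of_nonneg hγ, abs_one,
    Real.one_rpow]
  rw [rootEq] at hroot
  linarith

lemma hasDerivAt_hfun_zero (ε : ℝ) (hγ : 0 < γ) (hroot : rootEq N p μ γ) :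
    HasDerivAt (hfun N p μ γ ε) ((p - 1) * γ ^ (p - 2) * (-p * γ + N - p + ε) * ε) 0 := by
  have hlin : ∀ c d : ℝ, HasDerivAt (fun t : ℝ => d - c * t) (-c) 0 := fun c d => by
    simpa using ((hasDerivAt_id (0 : ℝ)).const_mul c).const_sub d
  have hpow : ∀ c d : ℝ, 0 < d →
      HasDerivAt (fun t : ℝ => |d - c * t| ^ (p - 2)) (-c * (p - 2) * d ^ (p - 2 - 1)) 0 :=
    fun c d hd => by
      have habs := (hasDerivAt_abs_pos (by simpa using hd)).comp 0 (hlin c d)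
      simpa [abs_of_pos hd] using habs.rpow_const (p := p - 2) (Or.inl (by simp [hd.ne']))
  have hk : HasDerivAt (fun t : ℝ => kfun N p (γ - ε) * t - kfun N p γ) (kfun N p (γ - ε)) 0 := by
    simpa using ((hasDerivAt_id (0 : ℝ)).const_mul (kfun N p (γ - ε))).sub_const (kfun N p γ)
  have h := ((hpow (γ - ε) γ hγ).mul hk).sub
    (((hpow 1 1 one_pos).const_mul μ).mul (hlin 1 1))
  refine (h.congr_deriv ?_).congr_of_eventuallyEq (.of_forall fun t => by simp [hfun])
  rw [rootEq] at hroot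
  simp only [mul_zero, sub_zero, abs_of_pos hγ, abs_one, Real.one_rpow,
    Real.rpow_sub_one hγ.ne', kfun]
  field_simp
  linear_combination (p - 1) * γ * hroot

end hfun

theorem hfun_deriv_pos_and_comparison (N p μ γ₁ γ₂ γ ε : ℝ)
    (hp : 1 < p)
    (hroot₁ : rootEq N p μ γ₁) (hroot₂ : rootEq N p μ γ₂)
    (h₁pos : 0 < γ₁) (h₁ : γ₁ < (N - p) / p) (h₂ : (N - p) / p < γ₂)
    (hcase : (γ = γ₁ ∧ 0 < ε ∧ 0 < -p * γ + N - p + ε) ∨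
             (γ = γ₂ ∧ ε < 0 ∧ -p * γ + N - p + ε < 0)) :
    0 < (p - 1) * γ ^ (p - 2) * (-p * γ + N - p + ε) * ε ∧
    ∃ δh : ℝ, 0 < δh ∧ δh < 1 ∧ ∀ t : ℝ, 0 < t → t < δh →
      (1 / 2) * ((p - 1) * γ ^ (p - 2) * (-p * γ + N - p + ε) * ε) * t ≤ hfun N p μ γ ε t ∧
      hfun N p μ γ ε t ≤ 2 * ((p - 1) * γ ^ (p - 2) * (-p * γ + N - p + ε) * ε) * t := by
  obtain ⟨hγ, hroot, hsign⟩ : 0 < γ ∧ rootEq N p μ γ ∧ 0 < (-p * γ + N - p + ε) * ε := by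
    rcases hcase with ⟨rfl, hε, hs⟩ | ⟨rfl, hε, hs⟩
    · exact ⟨h₁pos, hroot₁, mul_pos hs hε⟩
    · exact ⟨h₁pos.trans (h₁.trans h₂), hroot₂, mul_pos_of_neg_of_neg hs hε⟩
  have hD : 0 < (p - 1) * γ ^ (p - 2) * (-p * γ + N - p + ε) * ε := by
    rw [mul_assoc]
    exact mul_pos (mul_pos (sub_pos.2 hp) (Real.rpow_pos_of_pos hγ _)) hsign
  refine ⟨hD, ?_⟩
  obtain ⟨u, hu, hsub⟩ := mem_nhdsGT_iff_exists_Ioo_subset.1 <|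
    (hasDerivAt_hfun_zero ε hγ hroot).eventually_mul_lt_and_lt_mul (hfun_zero ε hγ.le hroot)
      (half_lt_self hD) (lt_two_mul_self hD)
  refine ⟨min u (1 / 2), lt_min hu one_half_pos, (min_le_right _ _).trans_lt one_half_lt_one,
    fun t ht htδ => ?_⟩
  obtain ⟨hlo, hhi⟩ := hsub ⟨ht, htδ.trans_le (min_le_left _ _)⟩
  constructor <;> linarith
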